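/- For every τ ∈ A₀, the set difference \overline{J_τ} ∖ J_τ (closure of the limit set minus the limit set) is at most countable, and dim_H(\overline{J_τ}) = dim_H(J_τ) = h_τ. -/

import Mathlib

/-!
Let `z = lim z_k` with `z_k ∈ J_τ` coded by words `ω_k`. Bounded subsets of `I_τ` are finite,
so along an ultrafilter each letter `ω_k(i)` either stabilises or tends to infinity. If every
letter stabilises, to a word `w` say, then `z` lies in each compact set
`φ_{w_1} ∘ ⋯ ∘ φ_{w_n}(X)`, hence in `J_τ`. Otherwise, at the first escaping position `j`,
`φ_{ω_k(j)}(X)` shrinks to `0` and `z = φ_{w_1} ∘ ⋯ ∘ φ_{w_j}(0)`. So `closure J_τ \ J_τ` lies in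
the countable set of images of `0` under finite words, which has Hausdorff dimension `0`.
-/

open Complex Metric Filter Set
open scoped ENNReal NNReal Topology

noncomputable section

/-- The parameter space `A₀ = {u+iv : u ≥ 0, v ≥ 1}`. -/
def A0 : Set ℂ := {τ : ℂ | 0 ≤ τ.re ∧ 1 ≤ τ.im}

/-- The phase space `X = {z : |z - 1/2| ≤ 1/2}`. -/
def Xcl : Set ℂ := {z : ℂ | ‖z - 1/2‖ ≤ 1/2}

/-- The alphabet `I_τ = {m + nτ : m, n ∈ ℕ₊}`. -/
def Itau (τ : ℂ) : Set ℂ := {b : ℂ | ∃ m n : ℕ+, b = ((m : ℕ) : ℂ) + ((n : ℕ) : ℂ) * τ}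

/-- The generator `φ_b(z) = 1/(z+b)`. -/
def phi (b z : ℂ) : ℂ := 1 / (z + b)

/-- `wordMap ω n = φ_{ω 0} ∘ ⋯ ∘ φ_{ω (n-1)}` (the composition associated to the
first `n` letters of `ω`, applying `φ_{ω (n-1)}` first). -/
def wordMap (ω : ℕ → ℂ) : ℕ → ℂ → ℂ
  | 0 => id
  | n + 1 => wordMap ω n ∘ phi (ω n)

/-- The limit set `J_τ = ⋃_{ω ∈ I_τ^ℕ} ⋂_{n ≥ 1} φ_{ω₁}∘⋯∘φ_{ω_n}(X)`. -/
def Jset (τ : ℂ) : Set ℂ :=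
  ⋃ (ω : ℕ → ℂ) (_ : ∀ i, ω i ∈ Itau τ), ⋂ (n : ℕ) (_ : 1 ≤ n), wordMap ω n '' Xcl

/-- The Hausdorff dimension `h_τ` of the limit set, as a real number. -/
def hdim (τ : ℂ) : ℝ := (dimH (Jset τ)).toReal

open Bornology

lemma Xcl_eq_closedBall : Xcl = closedBall (1 / 2 : ℂ) (1 / 2) := by
  ext z; simp [Xcl, dist_eq_norm]

lemma isCompact_Xcl : IsCompact Xcl :=
  Xcl_eq_closedBall ▸ isCompact_closedBall _ _

lemma zero_mem_Xcl : (0 : ℂ) ∈ Xcl := by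
  simp [Xcl_eq_closedBall]

lemma re_nonneg_of_mem_Xcl {z : ℂ} (hz : z ∈ Xcl) : 0 ≤ z.re := by
  simpa using (abs_le.1 ((abs_re_le_norm (z - 1 / 2)).trans hz)).1

lemma norm_le_one_of_mem_Xcl {z : ℂ} (hz : z ∈ Xcl) : ‖z‖ ≤ 1 :=
  calc ‖z‖ ≤ ‖(1 / 2 : ℂ)‖ + ‖z - 1 / 2‖ := norm_le_norm_add_norm_sub' z (1 / 2)
    _ ≤ 1 / 2 + 1 / 2 := add_le_add (by norm_num) hz
    _ = 1 := by norm_num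

lemma inv_mem_Xcl_of_one_le_re {w : ℂ} (hw : 1 ≤ w.re) : w⁻¹ ∈ Xcl := by
  have hw0 : w ≠ 0 := fun h => by simp [h] at hw; linarith
  have hnorm : ‖2 - w‖ ≤ ‖w‖ := by
    rw [← pow_le_pow_iff_left₀ (norm_nonneg _) (norm_nonneg _) two_ne_zero, Complex.sq_norm,
      Complex.sq_norm, normSq_apply, normSq_apply]
    simp only [sub_re, sub_im, re_ofNat, im_ofNat]
    nlinarith
  have heq : w⁻¹ - 1 / 2 = (2 - w) / (2 * w) := by field_simp
  simp only [Xcl, mem_ofPred_eq, heq, norm_div, norm_mul, Complex.norm_ofNat]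
  rw [div_le_iff₀ (by positivity)]
  linarith

lemma natCast_le_re_add_mul {τ : ℂ} (hτ : τ ∈ A0) (m n : ℕ) :
    (m : ℝ) ≤ ((m : ℂ) + n * τ).re := by
  simpa using mul_nonneg n.cast_nonneg hτ.1

lemma natCast_le_im_add_mul {τ : ℂ} (hτ : τ ∈ A0) (m n : ℕ) :
    (n : ℝ) ≤ ((m : ℂ) + n * τ).im := by
  simpa using le_mul_of_one_le_right n.cast_nonneg hτ.2

lemma one_le_re_of_mem_Itau {τ b : ℂ} (hτ : τ ∈ A0) (hb : b ∈ Itau τ) : 1 ≤ b.re := by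
  obtain ⟨m, n, rfl⟩ := hb
  exact le_trans (Nat.one_le_cast.2 m.pos) (natCast_le_re_add_mul hτ m n)

lemma countable_Itau (τ : ℂ) : (Itau τ).Countable :=
  (countable_range fun p : ℕ+ × ℕ+ => ((p.1 : ℕ) : ℂ) + ((p.2 : ℕ) : ℂ) * τ).mono
    fun _ ⟨m, n, hb⟩ => mem_range.2 ⟨(m, n), hb.symm⟩

lemma finite_Itau_inter_of_isBounded {τ : ℂ} (hτ : τ ∈ A0) {B : Set ℂ} (hB : IsBounded B) :
    (Itau τ ∩ B).Finite := by
  obtain ⟨M, hM⟩ := hB.subset_closedBall 0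
  refine (((finite_Iic ⌈M⌉₊).prod (finite_Iic ⌈M⌉₊)).image
    fun p : ℕ × ℕ => (p.1 : ℂ) + p.2 * τ).subset ?_
  rintro _ ⟨⟨m, n, rfl⟩, hb⟩
  have hle : ‖((m : ℕ) : ℂ) + ((n : ℕ) : ℂ) * τ‖ ≤ ⌈M⌉₊ :=
    (mem_closedBall_zero_iff.1 (hM hb)).trans (Nat.le_ceil M)
  refine ⟨((m : ℕ), (n : ℕ)), ⟨?_, ?_⟩, rfl⟩
  · exact_mod_cast ((natCast_le_re_add_mul hτ m n).trans (re_le_norm _)).trans hle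
  · exact_mod_cast ((natCast_le_im_add_mul hτ m n).trans (im_le_norm _)).trans hle

lemma eventually_eq_or_tendsto_cobounded {α ι : Type*} [Bornology α] {S : Set α}
    (hS : ∀ B, IsBounded B → (S ∩ B).Finite) (U : Ultrafilter ι) {f : ι → α}
    (hf : ∀ k, f k ∈ S) : (∃ b ∈ S, ∀ᶠ k in U, f k = b) ∨ Tendsto f U (cobounded α) := by
  refine or_iff_not_imp_right.2 fun hesc => ?_
  obtain ⟨s, hs, hfs⟩ : ∃ s ∈ cobounded α, f ⁻¹' s ∉ U := by
    simpa [tendsto_def] using hesc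
  have hmem : S ∩ sᶜ ∈ U.map f :=
    (Eventually.of_forall hf).and (Ultrafilter.compl_mem_iff_notMem.2 hfs)
  obtain ⟨b, hb, hUb⟩ :=
    Ultrafilter.eq_pure_of_finite_mem (hS _ (isBounded_compl_iff.2 hs)) hmem
  have hsingle : {b} ∈ U.map f := hUb ▸ rfl
  exact ⟨b, hb.1, hsingle⟩

lemma one_le_re_add {b z : ℂ} (hb : 1 ≤ b.re) (hz : z ∈ Xcl) : 1 ≤ (z + b).re := by
  rw [add_re]; linarith [re_nonneg_of_mem_Xcl hz]

lemma mapsTo_phi {b : ℂ} (hb : 1 ≤ b.re) : MapsTo (phi b) Xcl Xcl := fun z hz => by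
  simpa [phi] using inv_mem_Xcl_of_one_le_re (one_le_re_add hb hz)

lemma continuousOn_phi {b : ℂ} (hb : 1 ≤ b.re) : ContinuousOn (phi b) Xcl :=
  continuousOn_const.div (continuousOn_id.add continuousOn_const) fun z hz h =>
    absurd (one_le_re_add hb hz) (by simp [h])

lemma tendsto_phi_nhds_zero {ι : Type*} {l : Filter ι} {b x : ι → ℂ}
    (hb : Tendsto b l (cobounded ℂ)) (hx : ∀ k, x k ∈ Xcl) :
    Tendsto (fun k => phi (b k) (x k)) l (𝓝 0) := by
  have hsum : Tendsto (fun k => x k + b k) l (cobounded ℂ) := by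
    rw [← tendsto_norm_atTop_iff_cobounded] at hb ⊢
    refine tendsto_atTop_mono (fun k => ?_) (tendsto_atTop_add_const_right _ (-1) hb)
    have := norm_le_norm_add_norm_sub' (b k) (x k + b k)
    rw [sub_add_cancel_right, norm_neg] at this
    linarith [norm_le_one_of_mem_Xcl (hx k)]
  simpa [phi, Function.comp_def] using tendsto_inv₀_cobounded.comp hsum

lemma wordMap_succ' (ω : ℕ → ℂ) (n : ℕ) :
    wordMap ω (n + 1) = phi (ω 0) ∘ wordMap (fun i => ω (i + 1)) n := by
  induction n with
  | zero => rfl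
  | succ n ih => rw [wordMap, ih]; rfl

lemma wordMap_congr {ω ω' : ℕ → ℂ} {n : ℕ} (h : ∀ i < n, ω i = ω' i) :
    wordMap ω n = wordMap ω' n := by
  induction n with
  | zero => rfl
  | succ n ih => rw [wordMap, wordMap, ih fun i hi => h i (by omega), h n n.lt_succ_self]

lemma continuousOn_wordMap {ω : ℕ → ℂ} (hω : ∀ i, 1 ≤ (ω i).re) :
    ∀ n, ContinuousOn (wordMap ω n) Xcl
  | 0 => continuousOn_id
  | n + 1 => (continuousOn_wordMap hω n).comp (continuousOn_phi (hω n)) (mapsTo_phi (hω n))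

lemma countable_setOf_wordMap {S : Set ℂ} (hS : S.Countable) (x : ℂ) (n : ℕ) :
    {y | ∃ ω : ℕ → ℂ, (∀ i, ω i ∈ S) ∧ wordMap ω n x = y}.Countable := by
  induction n with
  | zero => exact (countable_singleton x).mono (by rintro _ ⟨ω, -, rfl⟩; rfl)
  | succ n ih =>
    refine (hS.image2 ih phi).mono ?_
    rintro _ ⟨ω, hω, rfl⟩
    rw [wordMap_succ']
    exact mem_image2_of_mem (hω 0) ⟨_, fun i => hω (i + 1), rfl⟩

lemma mem_Jset {τ z : ℂ} :
    z ∈ Jset τ ↔ ∃ ω : ℕ → ℂ, (∀ i, ω i ∈ Itau τ) ∧ ∀ n, 1 ≤ n → z ∈ wordMap ω n '' Xcl := by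
  simp [Jset]

section Limits

variable {ι : Type*} {l : Filter ι} {ω : ι → ℕ → ℂ} {w : ℕ → ℂ} {zs : ι → ℂ} {z : ℂ}

lemma eventually_wordMap_eq {n : ℕ} (h : ∀ i < n, ∀ᶠ k in l, ω k i = w i) :
    ∀ᶠ k in l, wordMap (ω k) n = wordMap w n :=
  ((eventually_all_finite (finite_Iio n)).2 h).mono fun _ hk => wordMap_congr hk

variable [l.NeBot]

lemma mem_image_wordMap_of_tendsto (hw : ∀ i, 1 ≤ (w i).re) {n : ℕ}
    (hzs : ∀ k, zs k ∈ wordMap (ω k) n '' Xcl) (hlim : Tendsto zs l (𝓝 z))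
    (hagree : ∀ i < n, ∀ᶠ k in l, ω k i = w i) : z ∈ wordMap w n '' Xcl := by
  refine (isCompact_Xcl.image_of_continuousOn (continuousOn_wordMap hw n)).isClosed.mem_of_tendsto
    hlim ?_
  filter_upwards [eventually_wordMap_eq hagree] with k hk
  exact hk ▸ hzs k

lemma eq_wordMap_zero_of_tendsto (hω : ∀ k i, 1 ≤ (ω k i).re) (hw : ∀ i, 1 ≤ (w i).re)
    {j : ℕ} (hzs : ∀ k, zs k ∈ wordMap (ω k) (j + 1) '' Xcl) (hlim : Tendsto zs l (𝓝 z))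
    (hagree : ∀ i < j, ∀ᶠ k in l, ω k i = w i) (hesc : Tendsto (ω · j) l (cobounded ℂ)) :
    z = wordMap w j 0 := by
  choose x hxX hxz using hzs
  have hy : Tendsto (fun k => phi (ω k j) (x k)) l (𝓝[Xcl] 0) :=
    tendsto_nhdsWithin_iff.2 ⟨tendsto_phi_nhds_zero hesc hxX,
      Eventually.of_forall fun k => mapsTo_phi (hω k j) (hxX k)⟩
  refine tendsto_nhds_unique hlim
    ((((continuousOn_wordMap hw j) 0 zero_mem_Xcl).tendsto.comp hy).congr' ?_)
  filter_upwards [eventually_wordMap_eq hagree] with k hk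
  rw [← hxz k, ← hk]
  rfl

end Limits

lemma closure_Jset_subset {τ : ℂ} (hτ : τ ∈ A0) :
    closure (Jset τ) ⊆
      Jset τ ∪ ⋃ n, {y | ∃ ω : ℕ → ℂ, (∀ i, ω i ∈ Itau τ) ∧ wordMap ω n 0 = y} := by
  intro z hz
  obtain ⟨zs, hzsJ, hlim⟩ := mem_closure_iff_seq_limit.1 hz
  choose ω hωI hωJ using fun k => mem_Jset.1 (hzsJ k)
  set U := Ultrafilter.of (atTop : Filter ℕ)
  replace hlim : Tendsto zs U (𝓝 z) := hlim.mono_left (Ultrafilter.of_le _)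
  have hωre : ∀ k i, 1 ≤ (ω k i).re := fun k i => one_le_re_of_mem_Itau hτ (hωI k i)
  have hletter : ∀ i, ∃ b ∈ Itau τ,
      (∀ᶠ k in U, ω k i = b) ∨ Tendsto (ω · i) U (cobounded ℂ) := fun i =>
    (eventually_eq_or_tendsto_cobounded (fun _ => finite_Itau_inter_of_isBounded hτ) U
      (hωI · i)).elim (fun ⟨b, hb, h⟩ => ⟨b, hb, .inl h⟩) fun h => ⟨ω 0 i, hωI 0 i, .inr h⟩
  choose w hwI hw using hletter
  have hwre : ∀ i, 1 ≤ (w i).re := fun i => one_le_re_of_mem_Itau hτ (hwI i)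
  classical
  by_cases hesc : ∃ j, ¬ ∀ᶠ k in U, ω k j = w j
  · have hagree : ∀ i < Nat.find hesc, ∀ᶠ k in U, ω k i = w i := fun i hi =>
      not_not.1 (Nat.find_min hesc hi)
    refine Or.inr (mem_iUnion.2 ⟨Nat.find hesc, w, hwI, (eq_wordMap_zero_of_tendsto hωre hwre
      (fun k => hωJ k _ (Nat.le_add_left 1 _)) hlim hagree ?_).symm⟩)
    exact (hw _).resolve_left (Nat.find_spec hesc)
  · have hagree : ∀ i, ∀ᶠ k in U, ω k i = w i := not_exists_not.1 hesc
    exact Or.inl (mem_Jset.2 ⟨w, hwI, fun n hn =>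
      mem_image_wordMap_of_tendsto hwre (fun k => hωJ k n hn) hlim fun i _ => hagree i⟩)

lemma countable_closure_Jset_diff {τ : ℂ} (hτ : τ ∈ A0) :
    (closure (Jset τ) \ Jset τ).Countable :=
  (countable_iUnion fun n => countable_setOf_wordMap (countable_Itau τ) 0 n).mono
    fun _ hz => (closure_Jset_subset hτ hz.1).resolve_left hz.2

/-- `closure(J_τ) \ J_τ` is at most countable and `dim_H(closure J_τ) = dim_H(J_τ) = h_τ`. -/
theorem stmt19 :
    ∀ τ ∈ A0,
      (closure (Jset τ) \ Jset τ).Countable ∧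
      dimH (closure (Jset τ)) = dimH (Jset τ) := by
  intro τ hτ
  have hcount := countable_closure_Jset_diff hτ
  refine ⟨hcount, ?_⟩
  rw [← union_sdiff_cancel (subset_closure (s := Jset τ)), dimH_union, hcount.dimH_zero,
    max_eq_left zero_le]
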